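/- arXiv:1901.06407 — 3 statements merged into one kernel-verified Lean document; each statement's English description precedes it below -/
import Mathlib

section
/- In the model M_m, the root r_m satisfies ⟨b⟩(⟨b⟩⊤ ∧ [b]⟨b⟩⊤) (witnessed by the reflexive state t^m), while no state s_i^m or t^m satisfies the full conjunction A_m. -/
/-- Formulas of basic modal logic: propositional variables, ⊥, →, and [b]. -/
inductive MF : Type where
  | var : ℕ → MF
  | bot : MF
  | imp : MF → MF → MF
  | box : MF → MF

def MF.neg (φ : MF) : MF := .imp φ .bot
def MF.top : MF := .imp .bot .bot
def MF.and (φ ψ : MF) : MF := .neg (.imp φ (.neg ψ))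
def MF.dia (φ : MF) : MF := .neg (.box (.neg φ))

/-- ⟨b⟩^k φ -/
def MF.diaN : ℕ → MF → MF
  | 0, φ => φ
  | k + 1, φ => .dia (MF.diaN k φ)

/-- Standard Kripke satisfaction over a model (S, R, V). -/
def sat {S : Type} (R : S → S → Prop) (V : ℕ → S → Prop) : S → MF → Prop
  | s, .var p => V p s
  | _, .bot => False
  | s, .imp φ ψ => sat R V s φ → sat R V s ψ
  | s, .box φ => ∀ t, R s t → sat R V t φ
/-- States of the model M_m: root r, reflexive state t, and s_1, ..., s_m
(here `St.s i` for `i : Fin m` represents the paper's s_{i+1}). -/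
inductive St (m : ℕ) : Type where
  | r : St m
  | t : St m
  | s : Fin m → St m

/-- The base relation {(r,t), (t,t), (r,s_1)} ∪ {(s_i, s_{i+1}) : 1 ≤ i ≤ m-1}. -/
def baseRel (m : ℕ) : St m → St m → Prop := fun x y =>
  (x = .r ∧ y = .t) ∨ (x = .t ∧ y = .t) ∨
  (∃ h : 0 < m, x = .r ∧ y = .s ⟨0, h⟩) ∨
  (∃ i j : Fin m, x = .s i ∧ y = .s j ∧ (j : ℕ) = (i : ℕ) + 1)

/-- R_b: the transitive closure of the base relation. -/
def Rb (m : ℕ) : St m → St m → Prop := Relation.TransGen (baseRel m)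

/-- The valuation of M_m: all propositional variables are false everywhere. -/
def Vempty (m : ℕ) : ℕ → St m → Prop := fun _ _ => False

/-- A_m = ⟨b⟩^m [b]⊥ ∧ ¬⟨b⟩^{m+1} [b]⊥ ∧ ⟨b⟩(⟨b⟩⊤ ∧ [b]⟨b⟩⊤). -/
def Aform (m : ℕ) : MF :=
  .and (MF.diaN m (.box .bot))
    (.and (.neg (MF.diaN (m + 1) (.box .bot)))
      (.dia (.and (.dia .top) (.box (.dia .top)))))

/-- B_m = ⟨b⟩A_m. -/
def Bform (m : ℕ) : MF := .dia (Aform m)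

/-! The reflexive state `t` sees only itself, so it satisfies `⟨b⟩⊤ ∧ [b]⟨b⟩⊤` but can never
reach a dead end, which refutes the first conjunct `⟨b⟩^m [b]⊥` of `A_m` there. The states `s_i`
only see later states of the chain, and each of them is or sees the dead end `s_m`; hence no
state of the chain satisfies `⟨b⟩⊤ ∧ [b]⟨b⟩⊤`, which refutes the last conjunct of `A_m` at
every `s_i`. -/

section Semantics

variable {S : Type} {R : S → S → Prop} {V : ℕ → S → Prop} {x : S} {φ ψ : MF}

@[simp] lemma sat_neg : sat R V x φ.neg ↔ ¬ sat R V x φ := Iff.rfl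

@[simp] lemma sat_top : sat R V x MF.top := id

@[simp] lemma sat_imp : sat R V x (φ.imp ψ) ↔ (sat R V x φ → sat R V x ψ) := Iff.rfl

@[simp] lemma sat_box : sat R V x φ.box ↔ ∀ y, R x y → sat R V y φ := Iff.rfl

@[simp] lemma sat_and : sat R V x (φ.and ψ) ↔ sat R V x φ ∧ sat R V x ψ := by
  simp [MF.and]

@[simp] lemma sat_dia : sat R V x φ.dia ↔ ∃ y, R x y ∧ sat R V y φ := by
  simp [MF.dia]

lemma sat_dia_top_and_box_dia_top_iff :
    sat R V x ((MF.dia .top).and (.box (.dia .top))) ↔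
      (∃ y, R x y) ∧ ∀ y, R x y → ∃ z, R y z := by
  simp

lemma sat_dia_top_and_box_dia_top_of_mem {s : Set S} (hser : ∀ x ∈ s, ∃ y, R x y)
    (hclosed : ∀ x ∈ s, ∀ y, R x y → y ∈ s) (hx : x ∈ s) :
    sat R V x ((MF.dia .top).and (.box (.dia .top))) :=
  sat_dia_top_and_box_dia_top_iff.2 ⟨hser x hx, fun y hy => hser y (hclosed x hx y hy)⟩

lemma not_sat_diaN_box_bot_of_mem {s : Set S} (hser : ∀ x ∈ s, ∃ y, R x y)
    (hclosed : ∀ x ∈ s, ∀ y, R x y → y ∈ s) (k : ℕ) :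
    ∀ x ∈ s, ¬ sat R V x (MF.diaN k (.box .bot)) := by
  induction k with
  | zero =>
    intro x hx hbox
    obtain ⟨y, hxy⟩ := hser x hx
    exact hbox y hxy
  | succ k ih =>
    intro x hx hdia
    obtain ⟨y, hxy, hy⟩ := sat_dia.1 hdia
    exact ih y (hclosed x hx y hxy) hy

end Semantics

section Model

variable {m : ℕ}

lemma Rb_r_t : Rb m .r .t := .single (.inl ⟨rfl, rfl⟩)

lemma Rb_t_t : Rb m .t .t := .single (.inr (.inl ⟨rfl, rfl⟩))

lemma baseRel_t {y : St m} (h : baseRel m .t y) : y = .t := by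
  rcases h with ⟨hx, -⟩ | ⟨-, hy⟩ | ⟨-, hx, -⟩ | ⟨_, _, hx, -⟩
  · cases hx
  · exact hy
  · cases hx
  · cases hx

lemma eq_t_of_Rb_t {y : St m} (h : Rb m .t y) : y = .t := by
  induction h with
  | single h => exact baseRel_t h
  | tail _ h ih => exact baseRel_t (ih ▸ h)

lemma baseRel_s {i : Fin m} {y : St m} (h : baseRel m (.s i) y) :
    ∃ j : Fin m, y = .s j ∧ (j : ℕ) = i + 1 := by
  rcases h with ⟨hx, -⟩ | ⟨hx, -⟩ | ⟨-, hx, -⟩ | ⟨_, j, hx, hy, hj⟩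
  · cases hx
  · cases hx
  · cases hx
  · cases hx
    exact ⟨j, hy, hj⟩

lemma exists_lt_of_Rb_s {i : Fin m} {y : St m} (h : Rb m (.s i) y) :
    ∃ j : Fin m, y = .s j ∧ i < j := by
  induction h with
  | single h =>
    obtain ⟨j, rfl, hj⟩ := baseRel_s h
    exact ⟨j, rfl, Fin.lt_def.2 (by omega)⟩
  | tail _ h ih =>
    obtain ⟨j, rfl, hij⟩ := ih
    obtain ⟨k, rfl, hk⟩ := baseRel_s h
    exact ⟨k, rfl, Fin.lt_def.2 (by omega)⟩

lemma not_Rb_s_of_succ_eq {i : Fin m} (hi : (i : ℕ) + 1 = m) (y : St m) : ¬ Rb m (.s i) y :=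
  fun hy => by
    obtain ⟨j, -, hij⟩ := exists_lt_of_Rb_s hy
    have := Fin.lt_def.1 hij
    omega

lemma Rb_s_of_lt {i j : Fin m} (hij : i < j) : Rb m (.s i) (.s j) := by
  obtain ⟨j, hj⟩ := j
  induction j with
  | zero => exact absurd (Fin.lt_def.1 hij) (Nat.not_lt_zero _)
  | succ n ih =>
    have hstep : baseRel m (.s ⟨n, by omega⟩) (.s ⟨n + 1, hj⟩) :=
      .inr (.inr (.inr ⟨_, _, rfl, rfl, rfl⟩))
    rcases Nat.lt_succ_iff_lt_or_eq.1 (Fin.lt_def.1 hij) with hin | hin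
    · exact .tail (ih (by omega) (Fin.lt_def.2 hin)) hstep
    · subst hin
      exact .single hstep

lemma not_sat_dia_top_and_box_dia_top_s {V : ℕ → St m → Prop} (i : Fin m) :
    ¬ sat (Rb m) V (.s i) ((MF.dia .top).and (.box (.dia .top))) := by
  rw [sat_dia_top_and_box_dia_top_iff]
  rintro ⟨⟨y, hy⟩, hbox⟩
  by_cases hi : (i : ℕ) + 1 = m
  · exact not_Rb_s_of_succ_eq hi y hy
  · have hlast : (i : ℕ) < m - 1 := by omega
    obtain ⟨z, hz⟩ := hbox _ (Rb_s_of_lt (j := ⟨m - 1, by omega⟩) (Fin.lt_def.2 hlast))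
    exact not_Rb_s_of_succ_eq (by simp; omega) z hz

end Model

theorem stmt3_general (m : ℕ) :
    (Rb m St.r St.t ∧
      sat (Rb m) (Vempty m) St.t (MF.and (.dia .top) (.box (.dia .top))) ∧
      sat (Rb m) (Vempty m) St.r (MF.dia (MF.and (.dia .top) (.box (.dia .top)))))
    ∧ ¬ sat (Rb m) (Vempty m) St.t (Aform m)
    ∧ ∀ i : Fin m, ¬ sat (Rb m) (Vempty m) (St.s i) (Aform m) := by
  have hser : ∀ x ∈ ({.t} : Set (St m)), ∃ y, Rb m x y := by
    rintro _ rfl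
    exact ⟨.t, Rb_t_t⟩
  have hclosed : ∀ x ∈ ({.t} : Set (St m)), ∀ y, Rb m x y → y ∈ ({.t} : Set (St m)) :=
    fun _ hx _ hy => eq_t_of_Rb_t (hx ▸ hy)
  have ht := sat_dia_top_and_box_dia_top_of_mem (V := Vempty m) hser hclosed rfl
  refine ⟨⟨Rb_r_t, ht, sat_dia.2 ⟨.t, Rb_r_t, ht⟩⟩, ?_, fun i => ?_⟩
  · rw [Aform, sat_and]
    exact fun h => not_sat_diaN_box_bot_of_mem hser hclosed m _ rfl h.1
  · rw [Aform, sat_and, sat_and, sat_dia]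
    rintro ⟨-, -, y, hy, hsat⟩
    obtain ⟨j, rfl, -⟩ := exists_lt_of_Rb_s hy
    exact not_sat_dia_top_and_box_dia_top_s j hsat

/-- In M_m, the root satisfies ⟨b⟩(⟨b⟩⊤ ∧ [b]⟨b⟩⊤), witnessed by the
reflexive state t^m, while neither t^m nor any s_i^m satisfies A_m. -/
theorem stmt3 (m : ℕ) (hm : 1 ≤ m) :
    (Rb m St.r St.t ∧
      sat (Rb m) (Vempty m) St.t (MF.and (.dia .top) (.box (.dia .top))) ∧
      sat (Rb m) (Vempty m) St.r (MF.dia (MF.and (.dia .top) (.box (.dia .top)))))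
    ∧ ¬ sat (Rb m) (Vempty m) St.t (Aform m)
    ∧ ∀ i : Fin m, ¬ sat (Rb m) (Vempty m) (St.s i) (Aform m) :=
  stmt3_general m
end

section
/- If the formula Θ ∧ φ' (with Θ = p_{n+1} ∧ [b*](⟨b⟩p_{n+1} → p_{n+1}) and φ' the relativized translation of φ) is satisfiable, then it is satisfiable in a model in which p_{n+1} is true at every state. -/
/-- The relativized translation: ([b]φ)' = [b](p → φ'). -/
def relT (p : ℕ) : MF → MF
  | .var q => .var q
  | .bot => .bot
  | .imp a b => .imp (relT p a) (relT p b)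
  | .box a => .box (.imp (.var p) (relT p a))

/-- The variable q occurs in a formula. -/
def occurs (q : ℕ) : MF → Prop
  | .var r => r = q
  | .bot => False
  | .imp a b => occurs q a ∨ occurs q b
  | .box a => occurs q a

/-- The smallest subset of S containing s0 and closed under:
x ∈ S', x R y, y ⊨ p implies y ∈ S'. -/
inductive Gen {S : Type} (R : S → S → Prop) (V : ℕ → S → Prop) (p : ℕ) (s0 : S) : S → Prop
  | base : Gen R V p s0 s0
  | step {x y : S} : Gen R V p s0 x → R x y → V p y → Gen R V p s0 y

/-- Modal formulas with the iteration modality [b*]. -/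
inductive MFs : Type where
  | var : ℕ → MFs
  | bot : MFs
  | imp : MFs → MFs → MFs
  | box : MFs → MFs
  | boxS : MFs → MFs

def MFs.neg (φ : MFs) : MFs := .imp φ .bot
def MFs.top : MFs := .imp .bot .bot
def MFs.and (φ ψ : MFs) : MFs := .neg (.imp φ (.neg ψ))
def MFs.dia (φ : MFs) : MFs := .neg (.box (.neg φ))

/-- Satisfaction with [b*] interpreted via the reflexive-transitive closure. -/
def sats {S : Type} (R : S → S → Prop) (V : ℕ → S → Prop) : S → MFs → Prop
  | s, .var p => V p s
  | _, .bot => False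
  | s, .imp φ ψ => sats R V s φ → sats R V s ψ
  | s, .box φ => ∀ t, R s t → sats R V t φ
  | s, .boxS φ => ∀ t, Relation.ReflTransGen R s t → sats R V t φ

/-- Embedding of basic modal formulas into the language with [b*]. -/
def embed : MF → MFs
  | .var q => .var q
  | .bot => .bot
  | .imp a b => .imp (embed a) (embed b)
  | .box a => .box (embed a)

/-- Θ = p_{n+1} ∧ [b*](⟨b⟩p_{n+1} → p_{n+1}); the fresh variable p_{n+1}
is represented by `MFs.var n` (variables p_1, ..., p_n are var 0, ..., var (n-1)). -/
def Theta (n : ℕ) : MFs :=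
  MFs.and (.var n) (.boxS (.imp (MFs.dia (.var n)) (.var n)))

/-- All variables of φ are among p_1, ..., p_n (i.e. var 0, ..., var (n-1)). -/
def varsLt (n : ℕ) (φ : MF) : Prop := ∀ q : ℕ, occurs q φ → q < n


/-!
Restrict the model to the states where `p_{n+1}` holds. The relativized translation `φ'` only
looks at `b`-successors satisfying `p_{n+1}`, so its truth at such a state is unchanged, and in
the restricted model `p_{n+1}` holds everywhere, which makes `Θ` trivially true at every state.
-/

section Restriction

variable {S : Type} (R : S → S → Prop) (V : ℕ → S → Prop) (p : ℕ)

abbrev restrictRel : {x // V p x} → {x // V p x} → Prop := fun a b => R a.1 b.1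

abbrev restrictVal : ℕ → {x // V p x} → Prop := fun q a => V q a.1

theorem sats_embed_relT_restrict_iff (ψ : MF) (x : {x // V p x}) :
    sats (restrictRel R V p) (restrictVal V p) x (embed (relT p ψ)) ↔
      sats R V x.1 (embed (relT p ψ)) := by
  induction ψ generalizing x with
  | var q => rfl
  | bot => rfl
  | imp a b iha ihb => exact imp_congr (iha x) (ihb x)
  | box a ih =>
    simp only [relT, embed, sats]
    exact ⟨fun H t hR hV => (ih ⟨t, hV⟩).mp (H ⟨t, hV⟩ hR hV),
      fun H t hR hV => (ih t).mpr (H t.1 hR hV)⟩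

end Restriction

theorem sats_and_iff {S : Type} (R : S → S → Prop) (V : ℕ → S → Prop) (s : S) (φ ψ : MFs) :
    sats R V s (MFs.and φ ψ) ↔ sats R V s φ ∧ sats R V s ψ := by
  simp only [MFs.and, MFs.neg, sats]
  tauto

theorem sats_Theta_of_forall {S : Type} (R : S → S → Prop) (V : ℕ → S → Prop) (n : ℕ)
    (hV : ∀ x, V n x) (s : S) : sats R V s (Theta n) :=
  (sats_and_iff R V s _ _).mpr ⟨hV s, fun t _ _ => hV t⟩

theorem stmt11_general (n : ℕ) (φ : MF)
    (h : ∃ (S : Type) (R : S → S → Prop) (V : ℕ → S → Prop) (s : S),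
      sats R V s (MFs.and (Theta n) (embed (relT n φ)))) :
    ∃ (S : Type) (R : S → S → Prop) (V : ℕ → S → Prop) (s : S),
      (∀ x : S, V n x) ∧ sats R V s (MFs.and (Theta n) (embed (relT n φ))) := by
  obtain ⟨S, R, V, s, hs⟩ := h
  obtain ⟨hΘ, hφ⟩ := (sats_and_iff R V s _ _).mp hs
  have hsn : V n s := ((sats_and_iff R V s _ _).mp hΘ).1
  have hall : ∀ x : {x // V n x}, restrictVal V n n x := fun x => x.2
  refine ⟨{x // V n x}, restrictRel R V n, restrictVal V n, ⟨s, hsn⟩, hall, ?_⟩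
  exact (sats_and_iff _ _ _ _ _).mpr ⟨sats_Theta_of_forall _ _ n hall _,
    (sats_embed_relT_restrict_iff R V n φ ⟨s, hsn⟩).mpr hφ⟩

/-- If Θ ∧ φ' is satisfiable, it is satisfiable in a model where the fresh
variable p_{n+1} is true at every state. -/
theorem stmt11 (n : ℕ) (φ : MF) (hφ : varsLt n φ)
    (h : ∃ (S : Type) (R : S → S → Prop) (V : ℕ → S → Prop) (s : S),
      sats R V s (MFs.and (Theta n) (embed (relT n φ)))) :
    ∃ (S : Type) (R : S → S → Prop) (V : ℕ → S → Prop) (s : S),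
      (∀ x : S, V n x) ∧ sats R V s (MFs.and (Theta n) (embed (relT n φ))) :=
  stmt11_general n φ h
end

section
/- In the composite model M'' (original model M with models M_1,...,M_{n+1} attached, with edges from x in M to r_m iff M, x ⊨ p_m, and p_{n+1} universally true in M), no state y belonging to the original model M satisfies A_i for any i ∈ {1,...,n+1}. -/
/-- States of the composite model M'': the original states S together with
the disjointly attached models M_1, ..., M_{n+1} (the member `⟨m, a⟩`
with `m : Fin (n+1)` is state a of the model M_{m+1}). -/
def CS (n : ℕ) (S : Type) : Type := S ⊕ (Σ m : Fin (n + 1), St ((m : ℕ) + 1))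

/-- The accessibility relation of M'': R inside M, R_b inside each attached
M_m, plus an edge from x ∈ M to the root r_m of M_m exactly when M, x ⊨ p_m
(variable p_m is `var (m-1)`, i.e. `V m x` for `m : Fin (n+1)`). -/
def CR (n : ℕ) {S : Type} (R : S → S → Prop) (V : ℕ → S → Prop) :
    CS n S → CS n S → Prop
  | .inl x, .inl y => R x y
  | .inl x, .inr ⟨m, a⟩ => a = St.r ∧ V m x
  | .inr _, .inl _ => False
  | .inr ⟨m, a⟩, .inr ⟨m', b⟩ => ∃ h : m = m', Rb ((m' : ℕ) + 1) (h ▸ a) b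

/-- The valuation of M'': as in M on the original states, and all variables
false on the attached models. -/
def CV (n : ℕ) {S : Type} (V : ℕ → S → Prop) : ℕ → CS n S → Prop
  | q, .inl x => V q x
  | _, .inr _ => False

lemma sat_dia_s16 {S : Type} (R : S → S → Prop) (V : ℕ → S → Prop) (s : S) (φ : MF) :
    sat R V s (MF.dia φ) ↔ ∃ t, R s t ∧ sat R V t φ := by
  simp only [MF.dia, MF.neg, sat]
  constructor
  · intro h
    by_contra hc
    push_neg at hc
    exact h (fun t ht hφ => hc t ht hφ)
  · rintro ⟨t, ht, hφ⟩ hbox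
    exact hbox t ht hφ

lemma sat_and_s16 {S : Type} (R : S → S → Prop) (V : ℕ → S → Prop) (s : S) (φ ψ : MF) :
    sat R V s (MF.and φ ψ) ↔ sat R V s φ ∧ sat R V s ψ := by
  simp only [MF.and, MF.neg, sat]
  constructor
  · intro h
    by_contra hc
    rw [not_and_or] at hc
    rcases hc with hc | hc
    · exact h (fun hφ => absurd hφ hc)
    · exact h (fun _ hψ => hc hψ)
  · rintro ⟨hφ, hψ⟩ h
    exact h hφ hψ

lemma rb_r_s (m : ℕ) (j : Fin m) : Rb m St.r (St.s j) := by
  obtain ⟨j, hj⟩ := j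
  induction j with
  | zero => exact Relation.TransGen.single (Or.inr (Or.inr (Or.inl ⟨hj, rfl, rfl⟩)))
  | succ k ih =>
    refine Relation.TransGen.tail (ih (Nat.lt_of_succ_lt hj)) ?_
    exact Or.inr (Or.inr (Or.inr ⟨⟨k, Nat.lt_of_succ_lt hj⟩, ⟨k+1, hj⟩, rfl, rfl, rfl⟩))

lemma s_last_dead (m : ℕ) (z : St (m+1)) : ¬ baseRel (m+1) (St.s ⟨m, Nat.lt_succ_self m⟩) z := by
  rintro (⟨h, -⟩ | ⟨h, -⟩ | ⟨-, h, -⟩ | ⟨i, j, hi, -, hij⟩)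
  · cases h
  · cases h
  · cases h
  · have : (i : ℕ) = m := by
      have := St.s.inj hi
      exact congrArg Fin.val this ▸ rfl
    omega

lemma s_last_box (m : ℕ) (z : St (m+1)) : ¬ Rb (m+1) (St.s ⟨m, Nat.lt_succ_self m⟩) z := by
  intro h
  rcases Relation.TransGen.head'_iff.mp h with ⟨c, hc, -⟩
  exact s_last_dead m c hc
lemma chain_sat (n : ℕ) {S : Type} (R : S → S → Prop) (V : ℕ → S → Prop) :
    ∀ k j (hj : j + k = n),
      sat (CR n R V) (CV n V)
        (Sum.inr ⟨⟨n, Nat.lt_succ_self n⟩, St.s ⟨j, by show _ < n + 1; omega⟩⟩) (MF.diaN k (.box .bot)) := by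
  intro k
  induction k with
  | zero =>
    intro j hj
    have hjn : j = n := by omega
    subst hjn
    intro t ht
    rcases t with x | ⟨m', b⟩
    · exact ht
    · obtain ⟨h, hRb⟩ := ht
      subst h
      exact s_last_box _ b hRb
  | succ k ih =>
    intro j hj
    erw [MF.diaN, sat_dia_s16]
    refine ⟨Sum.inr ⟨⟨n, Nat.lt_succ_self n⟩, St.s ⟨j+1, by show _ < n + 1; omega⟩⟩, ⟨rfl, ?_⟩, ih (j+1) (by omega)⟩
    exact Relation.TransGen.single
      (Or.inr (Or.inr (Or.inr ⟨⟨j, by show _ < n + 1; omega⟩, ⟨j+1, by show _ < n + 1; omega⟩, rfl, rfl, rfl⟩)))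

/-- If p_{n+1} is universally true in M, then in the composite model M''
(which hence has an edge from every state of M to r_{n+1}), no state of the
original model M satisfies A_i for any i ∈ {1,...,n+1}. -/
theorem stmt16 (n : ℕ) {S : Type} (R : S → S → Prop) (V : ℕ → S → Prop)
    (hV : ∀ x : S, V n x) (y : S) (i : ℕ) (hi1 : 1 ≤ i) (hi2 : i ≤ n + 1) :
    ¬ sat (CR n R V) (CV n V) (Sum.inl y) (Aform i) := by
  intro h
  erw [Aform, sat_and_s16, sat_and_s16] at h
  obtain ⟨-, hY, -⟩ := h
  apply hY
  obtain ⟨i', rfl⟩ : ∃ i', i = i' + 1 := ⟨i - 1, by omega⟩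
  erw [MF.diaN, sat_dia_s16]
  refine ⟨Sum.inr ⟨⟨n, Nat.lt_succ_self n⟩, St.r⟩, ⟨rfl, hV y⟩, ?_⟩
  erw [MF.diaN, sat_dia_s16]
  refine ⟨Sum.inr ⟨⟨n, Nat.lt_succ_self n⟩, St.s ⟨n - i', by show _ < n + 1; omega⟩⟩, ⟨rfl, ?_⟩, ?_⟩
  · exact rb_r_s (n+1) ⟨n - i', by omega⟩
  · exact chain_sat n R V i' (n - i') (by omega)
end
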